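/- arXiv:2309.02157 — 3 statements merged into one kernel-verified Lean document; each statement's English description precedes it below -/
import Mathlib

section
/- Telescoping/simulation lemma: For two MDPs M = (S, A, r, T, γ) and M̂ = (S, A, r, T̂, γ) sharing the same reward r and initial state distribution μ₀, and any policy π, J(π, M) − J(π, M̂) = (γ/(1−γ)) · E_{(s,a)∼ρ^π_{M̂}} [ E_{s'∼T(·|s,a)} V^π_M(s') − E_{s'∼T̂(·|s,a)} V^π_M(s') ], where ρ^π_{M̂} is the normalized discounted occupancy measure of π in M̂. -/
open scoped BigOperators

/-- A Markov decision process on finite state space `S` and action space `A`,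
with reward `r`, transition kernel `T` (as a function giving next-state probabilities),
and discount factor `γ`. -/
structure MDP (S A : Type*) where
  r : S → A → ℝ
  T : S → A → S → ℝ
  γ : ℝ

variable {S A : Type*} [Fintype S] [Fintype A] [DecidableEq S]

/-- `π` is a stationary stochastic policy: `π s` is a probability distribution over actions. -/
def IsPolicy (π : S → A → ℝ) : Prop :=
  (∀ s a, 0 ≤ π s a) ∧ ∀ s, ∑ a, π s a = 1

/-- `T` is a transition kernel: `T s a` is a probability distribution over next states. -/
def IsKernel (T : S → A → S → ℝ) : Prop :=
  (∀ s a s', 0 ≤ T s a s') ∧ ∀ s a, ∑ s', T s a s' = 1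

/-- `μ` is a probability distribution on states. -/
def IsDist (μ : S → ℝ) : Prop :=
  (∀ s, 0 ≤ μ s) ∧ ∑ s, μ s = 1

/-- `stateDist M π μ₀ t s` is the probability `P^π_{M,t}(s)` that the state at time `t`
equals `s` when executing policy `π` in MDP `M` from initial distribution `μ₀`. -/
noncomputable def stateDist (M : MDP S A) (π : S → A → ℝ) (μ₀ : S → ℝ) : ℕ → S → ℝ
  | 0 => μ₀
  | t + 1 => fun s' => ∑ s, ∑ a, stateDist M π μ₀ t s * π s a * M.T s a s'

/-- Expected reward at time `t` under policy `π` in MDP `M` started from `μ₀`. -/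
noncomputable def expRewardAt (M : MDP S A) (π : S → A → ℝ) (μ₀ : S → ℝ) (t : ℕ) : ℝ :=
  ∑ s, ∑ a, stateDist M π μ₀ t s * π s a * M.r s a

/-- Value function `V^π_M(s) = E[∑_t γ^t r(s_t,a_t) | s₀ = s]`. -/
noncomputable def Vval (M : MDP S A) (π : S → A → ℝ) (s : S) : ℝ :=
  ∑' t : ℕ, M.γ ^ t * expRewardAt M π (fun x => if x = s then (1 : ℝ) else 0) t

/-- Expected discounted return `J(π, M) = E_{s ∼ μ₀}[V^π_M(s)]`. -/
noncomputable def Jval (M : MDP S A) (π : S → A → ℝ) (μ₀ : S → ℝ) : ℝ :=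
  ∑ s, μ₀ s * Vval M π s

/-- Normalized discounted occupancy measure
`ρ^π_M(s,a) = (1-γ) ∑_t γ^t P^π_{M,t}(s) π(a|s)`. -/
noncomputable def occupancy (M : MDP S A) (π : S → A → ℝ) (μ₀ : S → ℝ) (s : S) (a : A) : ℝ :=
  (1 - M.γ) * (∑' t : ℕ, M.γ ^ t * stateDist M π μ₀ t s) * π s a

/-- Total variation distance between finite distributions: `sup_E |p(E) - q(E)|`. -/
noncomputable def tvFin {X : Type*} [Fintype X] (p q : X → ℝ) : ℝ :=
  ⨆ E : Finset X, |∑ x ∈ E, p x - ∑ x ∈ E, q x|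

/-! Let `P` be the transition matrix of the chain that `π` induces in `M`, `P̂` the one in `M̂`,
and `g` the expected one-step reward. Then `V = ∑ₜ (γP)ᵗ g = (1 - γP)⁻¹ g`, and the occupancy
measure is `(1 - γ) μ₀ᵀ (1 - γP̂)⁻¹` weighted by `π`. The second resolvent identity
`(1 - γP)⁻¹ - (1 - γP̂)⁻¹ = (1 - γP̂)⁻¹ γ(P - P̂) (1 - γP)⁻¹`, paired with `μ₀` and applied to `g`,
is the claim. -/

open Matrix

theorem HasSum.matrix_mulVec {ι m n R : Type*} [Fintype n] [TopologicalSpace R]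
    [NonUnitalNonAssocSemiring R] [ContinuousAdd R] [ContinuousMul R]
    {B : ι → Matrix m n R} {N : Matrix m n R} (h : HasSum B N) (v : n → R) :
    HasSum (fun t => B t *ᵥ v) (N *ᵥ v) :=
  h.map (⟨⟨(· *ᵥ v), zero_mulVec v⟩, fun A B => add_mulVec A B v⟩ : Matrix m n R →+ m → R)
    (continuous_id.matrix_mulVec continuous_const)

theorem HasSum.matrix_vecMul {ι m n R : Type*} [Fintype m] [TopologicalSpace R]
    [NonUnitalNonAssocSemiring R] [ContinuousAdd R] [ContinuousMul R]
    {B : ι → Matrix m n R} {N : Matrix m n R} (h : HasSum B N) (v : m → R) :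
    HasSum (fun t => v ᵥ* B t) (v ᵥ* N) :=
  h.map (⟨⟨(v ᵥ* ·), vecMul_zero v⟩, fun A B => vecMul_add A B v⟩ : Matrix m n R →+ n → R)
    (continuous_const.matrix_vecMul continuous_id)

theorem Matrix.summable_smul_pow_of_mem_rowStochastic {n : Type*} [Fintype n] [DecidableEq n]
    {P : Matrix n n ℝ} (hP : P ∈ rowStochastic ℝ n) {γ : ℝ} (hγ : |γ| < 1) :
    Summable fun t => (γ • P) ^ t := by
  refine Pi.summable.2 fun i => Pi.summable.2 fun j => ?_
  refine Summable.of_norm_bounded (summable_geometric_of_lt_one (abs_nonneg γ) hγ) fun t => ?_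
  have hPt := pow_mem hP t
  rw [smul_pow, smul_apply, smul_eq_mul, norm_mul, norm_pow, Real.norm_eq_abs,
    Real.norm_of_nonneg (nonneg_of_mem_rowStochastic hPt)]
  exact mul_le_of_le_one_right (by positivity) (le_one_of_mem_rowStochastic hPt)

theorem sub_eq_mul_sub_mul_of_mul_eq_one {R : Type*} [Ring R] {a b x y : R}
    (hx : a * x = 1) (hy : y * b = 1) : x - y = y * (b - a) * x := by
  rw [mul_sub, sub_mul, hy, one_mul, mul_assoc, hx, mul_one]

namespace MDP

variable (M : MDP S A) (π : S → A → ℝ)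

def transitionMatrix : Matrix S S ℝ :=
  of fun s s' => ∑ a, π s a * M.T s a s'

def rewardVec (s : S) : ℝ :=
  ∑ a, π s a * M.r s a

variable {M π}

theorem transitionMatrix_mem_rowStochastic (hπ : IsPolicy π) (hT : IsKernel M.T) :
    M.transitionMatrix π ∈ rowStochastic ℝ S := by
  refine mem_rowStochastic_iff_sum.2 ⟨fun s s' => ?_, fun s => ?_⟩
  · exact Finset.sum_nonneg fun a _ => mul_nonneg (hπ.1 s a) (hT.1 s a s')
  · simp only [transitionMatrix, of_apply]
    rw [Finset.sum_comm]
    simp only [← Finset.mul_sum, hT.2, mul_one, hπ.2]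

theorem stateDist_eq_vecMul_pow (μ : S → ℝ) (t : ℕ) :
    stateDist M π μ t = μ ᵥ* M.transitionMatrix π ^ t := by
  induction t with
  | zero => rw [pow_zero, vecMul_one]; rfl
  | succ t ih =>
    rw [pow_succ, ← vecMul_vecMul, ← ih]
    funext s'
    simp only [stateDist, vecMul, dotProduct, transitionMatrix, of_apply, Finset.mul_sum, mul_assoc]

theorem expRewardAt_eq_dotProduct (μ : S → ℝ) (t : ℕ) :
    expRewardAt M π μ t = μ ⬝ᵥ (M.transitionMatrix π ^ t *ᵥ M.rewardVec π) := by
  rw [dotProduct_mulVec, ← stateDist_eq_vecMul_pow]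
  simp only [expRewardAt, dotProduct, rewardVec, Finset.mul_sum, mul_assoc]

theorem Vval_eq_tsum_pow_mulVec (hP : M.transitionMatrix π ∈ rowStochastic ℝ S)
    (hγ : |M.γ| < 1) :
    Vval M π = (∑' t, (M.γ • M.transitionMatrix π) ^ t) *ᵥ M.rewardVec π := by
  have hsum :=
    (summable_smul_pow_of_mem_rowStochastic hP hγ).hasSum.matrix_mulVec (M.rewardVec π)
  funext s
  rw [← (Pi.hasSum.1 hsum s).tsum_eq, Vval]
  congr 1 with t
  rw [expRewardAt_eq_dotProduct, smul_pow, smul_mulVec, Pi.smul_apply, smul_eq_mul]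
  simp only [dotProduct, ite_mul, one_mul, zero_mul, Finset.sum_ite_eq', Finset.mem_univ, if_true]

theorem tsum_pow_mul_stateDist (hP : M.transitionMatrix π ∈ rowStochastic ℝ S)
    (hγ : |M.γ| < 1) (μ : S → ℝ) (s : S) :
    ∑' t, M.γ ^ t * stateDist M π μ t s = (μ ᵥ* ∑' t, (M.γ • M.transitionMatrix π) ^ t) s := by
  have hsum := (summable_smul_pow_of_mem_rowStochastic hP hγ).hasSum.matrix_vecMul μ
  rw [← (Pi.hasSum.1 hsum s).tsum_eq]
  congr 1 with t
  rw [stateDist_eq_vecMul_pow, smul_pow, vecMul_smul, Pi.smul_apply, smul_eq_mul]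

theorem sum_occupancy_mul_sum_T (hP : M.transitionMatrix π ∈ rowStochastic ℝ S)
    (hγ : |M.γ| < 1) (M' : MDP S A) (μ v : S → ℝ) :
    ∑ s, ∑ a, occupancy M π μ s a * ∑ s', M'.T s a s' * v s'
      = (1 - M.γ) * ((μ ᵥ* ∑' t, (M.γ • M.transitionMatrix π) ^ t)
          ⬝ᵥ (M'.transitionMatrix π *ᵥ v)) := by
  have hPv : ∀ s, (M'.transitionMatrix π *ᵥ v) s = ∑ a, π s a * ∑ s', M'.T s a s' * v s' := by
    intro s
    simp only [mulVec, dotProduct, transitionMatrix, of_apply, Finset.sum_mul, Finset.mul_sum,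
      mul_assoc]
    exact Finset.sum_comm
  simp only [occupancy, tsum_pow_mul_stateDist hP hγ, dotProduct, hPv, Finset.mul_sum]
  exact Finset.sum_congr rfl fun s _ => Finset.sum_congr rfl fun a _ =>
    Finset.sum_congr rfl fun s' _ => by ring

end MDP

theorem telescoping_general (M Mhat : MDP S A) (π : S → A → ℝ) (μ₀ : S → ℝ)
    (hr : M.r = Mhat.r) (hγ : M.γ = Mhat.γ) (hγ0 : 0 < M.γ) (hγ1 : M.γ < 1)
    (hπ : IsPolicy π) (hT : IsKernel M.T) (hThat : IsKernel Mhat.T) :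
    Jval M π μ₀ - Jval Mhat π μ₀ =
      (M.γ / (1 - M.γ)) *
        ∑ s, ∑ a, occupancy Mhat π μ₀ s a *
          ((∑ s', M.T s a s' * Vval M π s') - (∑ s', Mhat.T s a s' * Vval M π s')) := by
  have hγabs : |M.γ| < 1 := abs_lt.2 ⟨by linarith, hγ1⟩
  have hγabs' : |Mhat.γ| < 1 := hγ ▸ hγabs
  have hP := MDP.transitionMatrix_mem_rowStochastic hπ hT
  have hP' := MDP.transitionMatrix_mem_rowStochastic hπ hThat
  simp only [mul_sub, Finset.sum_sub_distrib,
    MDP.sum_occupancy_mul_sum_T hP' hγabs', ← hγ]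
  set P := M.transitionMatrix π
  set P' := Mhat.transitionMatrix π
  set N := ∑' t, (M.γ • P) ^ t
  set N' := ∑' t, (M.γ • P') ^ t
  have hV : Vval M π = N *ᵥ M.rewardVec π := MDP.Vval_eq_tsum_pow_mulVec hP hγabs
  have hV' : Vval Mhat π = N' *ᵥ M.rewardVec π := by
    have hg : Mhat.rewardVec π = M.rewardVec π := by
      funext s; simp only [MDP.rewardVec, hr]
    rw [MDP.Vval_eq_tsum_pow_mulVec hP' hγabs', hg, ← hγ]
  have hresolvent : N - N' = N' * (M.γ • P - M.γ • P') * N := by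
    have := sub_eq_mul_sub_mul_of_mul_eq_one
      (summable_smul_pow_of_mem_rowStochastic hP hγabs).one_sub_mul_tsum_pow
      (summable_smul_pow_of_mem_rowStochastic hP' hγabs).tsum_pow_mul_one_sub
    rwa [sub_sub_sub_cancel_left] at this
  calc Jval M π μ₀ - Jval Mhat π μ₀ = μ₀ ⬝ᵥ ((N - N') *ᵥ M.rewardVec π) := by
        rw [sub_mulVec, dotProduct_sub, ← hV, ← hV']; rfl
    _ = M.γ * ((μ₀ ᵥ* N') ⬝ᵥ (P *ᵥ Vval M π) - (μ₀ ᵥ* N') ⬝ᵥ (P' *ᵥ Vval M π)) := by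
        rw [hresolvent, ← mulVec_mulVec, ← mulVec_mulVec, ← hV, dotProduct_mulVec, sub_mulVec,
          smul_mulVec, smul_mulVec, dotProduct_sub, dotProduct_smul, dotProduct_smul,
          smul_eq_mul, smul_eq_mul, mul_sub]
    _ = _ := by
        have h1γ : 1 - M.γ ≠ 0 := sub_ne_zero.2 hγ1.ne'
        field_simp

/-- Telescoping / simulation lemma: for MDPs `M` and `M̂` sharing the same reward,
discount `γ ∈ (0,1)` and initial distribution `μ₀`, and any policy `π`,
`J(π,M) - J(π,M̂) = (γ/(1-γ)) E_{(s,a) ∼ ρ^π_{M̂}}[E_{s' ∼ T(·|s,a)} V^π_M(s') -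
E_{s' ∼ T̂(·|s,a)} V^π_M(s')]`. -/
theorem telescoping (M Mhat : MDP S A) (π : S → A → ℝ) (μ₀ : S → ℝ)
    (hr : M.r = Mhat.r) (hγ : M.γ = Mhat.γ) (hγ0 : 0 < M.γ) (hγ1 : M.γ < 1)
    (hπ : IsPolicy π) (hT : IsKernel M.T) (hThat : IsKernel Mhat.T) (hμ : IsDist μ₀) :
    Jval M π μ₀ - Jval Mhat π μ₀ =
      (M.γ / (1 - M.γ)) *
        ∑ s, ∑ a, occupancy Mhat π μ₀ s a *
          ((∑ s', M.T s a s' * Vval M π s') - (∑ s', Mhat.T s a s' * Vval M π s')) :=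
  telescoping_general M Mhat π μ₀ hr hγ hγ0 hγ1 hπ hT hThat
end

section
/- If two MDPs M and M̂ share reward r and all value functions satisfy ‖V^π_M‖_∞ ≤ δ, then for any policy π, |J(π, M) − J(π, M̂)| ≤ (2γδ/(1−γ)) · E_{(s,a)∼ρ^π_{M̂}} [ d_TV(T(·|s,a), T̂(·|s,a)) ]. -/
open scoped BigOperators

variable {S A : Type*} [Fintype S] [Fintype A] [DecidableEq S]

/-! Let `V = V^π_M` and let `d_t` be the state distribution of `π` in `M̂` at time `t`. The
Bellman equation for `V` in `M` gives
`E_{d_t} V = E_{d_t,π} r + γ E_{d_{t+1}} V + γ E_{d_t,π}[(T - T̂) V]`, since `d_{t+1}` is `d_t`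
pushed through `T̂`. Multiplying by `γ^t` and summing telescopes to
`J(π,M) - J(π,M̂) = γ ∑_t γ^t E_{d_t,π}[(T - T̂) V]`. Because `|V| ≤ δ`, each one-step
discrepancy is at most `2δ d_TV(T, T̂)`, and `∑_t γ^t d_t π = ρ^π_{M̂} / (1 - γ)`. -/

section Distributions

open Finset

variable {X Y : Type*} [Fintype Y]

lemma IsPolicy.isDist {π : X → Y → ℝ} (hπ : IsPolicy π) (x : X) : IsDist (π x) :=
  ⟨hπ.1 x, hπ.2 x⟩

variable [Fintype X]

lemma IsDist.nonempty {μ : X → ℝ} (hμ : IsDist μ) : Nonempty X := by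
  by_contra h
  rw [not_nonempty_iff] at h
  simpa using hμ.2

lemma IsDist.le_one {μ : X → ℝ} (hμ : IsDist μ) (x : X) : μ x ≤ 1 :=
  hμ.2 ▸ single_le_sum (fun y _ => hμ.1 y) (mem_univ x)

lemma IsDist.abs_sum_mul_le {μ : X → ℝ} (hμ : IsDist μ) {f : X → ℝ} {C : ℝ}
    (hf : ∀ x, |f x| ≤ C) : |∑ x, μ x * f x| ≤ C :=
  calc |∑ x, μ x * f x| ≤ ∑ x, μ x * C := by
        refine (abs_sum_le_sum_abs _ _).trans (sum_le_sum fun x _ => ?_)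
        rw [abs_mul, abs_of_nonneg (hμ.1 x)]
        exact mul_le_mul_of_nonneg_left (hf x) (hμ.1 x)
    _ = C := by rw [← sum_mul, hμ.2, one_mul]

lemma IsDist.abs_sum_sum_mul_le {μ : X → ℝ} (hμ : IsDist μ) {π : X → Y → ℝ} (hπ : IsPolicy π)
    {g : X → Y → ℝ} {C : ℝ} (hg : ∀ x y, |g x y| ≤ C) :
    |∑ x, ∑ y, μ x * π x y * g x y| ≤ C := by
  simp only [mul_assoc, ← mul_sum]
  exact hμ.abs_sum_mul_le fun x => (hπ.isDist x).abs_sum_mul_le (hg x)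

lemma summable_pow_mul_of_abs_le {c C : ℝ} (hc0 : 0 ≤ c) (hc1 : c < 1) {w : ℕ → ℝ}
    (hw : ∀ t, |w t| ≤ C) : Summable fun t => c ^ t * w t := by
  refine .of_norm_bounded ((summable_geometric_of_lt_one hc0 hc1).mul_right C) fun t => ?_
  rw [Real.norm_eq_abs, abs_mul, abs_of_nonneg (pow_nonneg hc0 t)]
  exact mul_le_mul_of_nonneg_left (hw t) (pow_nonneg hc0 t)

lemma eq_tsum_pow_mul_sub {c C : ℝ} (hc0 : 0 ≤ c) (hc1 : c < 1) {w : ℕ → ℝ}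
    (hw : ∀ t, |w t| ≤ C) : w 0 = ∑' t, c ^ t * (w t - c * w (t + 1)) := by
  have hsum := summable_pow_mul_of_abs_le hc0 hc1 hw
  have hshift : Summable fun t => c ^ (t + 1) * w (t + 1) := (summable_nat_add_iff 1).2 hsum
  simp only [mul_sub, ← mul_assoc, ← pow_succ]
  rw [hsum.tsum_sub hshift, hsum.tsum_eq_zero_add]
  simp

lemma sum_abs_sub_le_two_mul_tvFin {p q : X → ℝ} (h : ∑ x, p x = ∑ x, q x) :
    ∑ x, |p x - q x| ≤ 2 * tvFin p q := by
  classical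
  set E := univ.filter fun x => q x ≤ p x
  have hE : ∑ x ∈ E, (p x - q x) = -∑ x ∈ univ.filter (fun x => ¬ q x ≤ p x), (p x - q x) := by
    rw [eq_neg_iff_add_eq_zero, sum_filter_add_sum_filter_not, sum_sub_distrib, h, sub_self]
  have hsplit : ∑ x, |p x - q x| = 2 * ∑ x ∈ E, (p x - q x) := by
    rw [← sum_filter_add_sum_filter_not univ (fun x => q x ≤ p x), two_mul]
    congr 1
    · exact sum_congr rfl fun x hx => abs_of_nonneg (sub_nonneg.2 (mem_filter.1 hx).2)
    · rw [hE, ← sum_neg_distrib]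
      exact sum_congr rfl fun x hx =>
        abs_of_neg (sub_neg.2 (not_le.1 (mem_filter.1 hx).2))
  have hle : ∑ x ∈ E, (p x - q x) ≤ tvFin p q := by
    rw [sum_sub_distrib]
    exact (le_abs_self _).trans
      (le_ciSup (f := fun E : Finset X => |∑ x ∈ E, p x - ∑ x ∈ E, q x|)
        (Set.finite_range _).bddAbove E)
  linarith

lemma abs_sum_mul_sub_sum_mul_le_tvFin {p q f : X → ℝ} {δ : ℝ} (h : ∑ x, p x = ∑ x, q x)
    (hδ : 0 ≤ δ) (hf : ∀ x, |f x| ≤ δ) :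
    |∑ x, p x * f x - ∑ x, q x * f x| ≤ 2 * δ * tvFin p q :=
  calc |∑ x, p x * f x - ∑ x, q x * f x| ≤ ∑ x, |p x - q x| * δ := by
        rw [← sum_sub_distrib]
        refine (abs_sum_le_sum_abs _ _).trans (sum_le_sum fun x _ => ?_)
        rw [← sub_mul, abs_mul]
        exact mul_le_mul_of_nonneg_left (hf x) (abs_nonneg _)
    _ ≤ 2 * δ * tvFin p q := by
        have := mul_le_mul_of_nonneg_left (sum_abs_sub_le_two_mul_tvFin h) hδ
        rw [← sum_mul]
        linarith

end Distributions

namespace MDP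

open Finset

variable {S A : Type*} [Fintype S] [Fintype A] (M : MDP S A) (π : S → A → ℝ)

noncomputable def push (μ : S → ℝ) : S → ℝ :=
  fun s' => ∑ s, ∑ a, μ s * π s a * M.T s a s'

noncomputable def expectAt (μ : S → ℝ) (t : ℕ) (g : S → A → ℝ) : ℝ :=
  ∑ s, ∑ a, stateDist M π μ t s * π s a * g s a

lemma stateDist_succ_eq_push_stateDist (μ : S → ℝ) (t : ℕ) :
    stateDist M π μ (t + 1) = M.push π (stateDist M π μ t) := rfl

lemma stateDist_succ (μ : S → ℝ) (t : ℕ) :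
    stateDist M π μ (t + 1) = stateDist M π (M.push π μ) t := by
  induction t with
  | zero => rfl
  | succ t ih => rw [stateDist_succ_eq_push_stateDist, ih]; rfl

lemma expectAt_succ (μ : S → ℝ) (t : ℕ) (g : S → A → ℝ) :
    M.expectAt π μ (t + 1) g = M.expectAt π (M.push π μ) t g := by
  rw [expectAt, stateDist_succ, expectAt]

lemma sum_push_mul (μ f : S → ℝ) :
    ∑ s', M.push π μ s' * f s' = ∑ s, ∑ a, μ s * π s a * ∑ s', M.T s a s' * f s' := by
  simp only [push, sum_mul, mul_sum, mul_assoc]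
  exact sum_comm_cycle.symm

variable {M π}

lemma isDist_push (hπ : IsPolicy π) (hT : IsKernel M.T) {μ : S → ℝ} (hμ : IsDist μ) :
    IsDist (M.push π μ) := by
  refine ⟨fun s' => sum_nonneg fun s _ => sum_nonneg fun a _ =>
    mul_nonneg (mul_nonneg (hμ.1 s) (hπ.1 s a)) (hT.1 s a s'), ?_⟩
  have h := sum_push_mul M π μ fun _ => 1
  simp only [mul_one, hT.2] at h
  simp only [h, ← mul_sum, hπ.2, mul_one, hμ.2]

lemma isDist_stateDist (hπ : IsPolicy π) (hT : IsKernel M.T) {μ : S → ℝ} (hμ : IsDist μ)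
    (t : ℕ) : IsDist (stateDist M π μ t) := by
  induction t with
  | zero => exact hμ
  | succ t ih => exact isDist_push hπ hT ih

lemma abs_expectAt_le (hπ : IsPolicy π) (hT : IsKernel M.T) {μ : S → ℝ} (hμ : IsDist μ)
    (t : ℕ) {g h : S → A → ℝ} (hg : ∀ s a, |g s a| ≤ h s a) :
    |M.expectAt π μ t g| ≤ M.expectAt π μ t h := by
  have hd := isDist_stateDist hπ hT hμ t
  refine (abs_sum_le_sum_abs _ _).trans (sum_le_sum fun s _ => ?_)
  refine (abs_sum_le_sum_abs _ _).trans (sum_le_sum fun a _ => ?_)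
  rw [abs_mul, abs_of_nonneg (mul_nonneg (hd.1 s) (hπ.1 s a))]
  exact mul_le_mul_of_nonneg_left (hg s a) (mul_nonneg (hd.1 s) (hπ.1 s a))

lemma summable_pow_mul_expectAt (hπ : IsPolicy π) (hT : IsKernel M.T) {μ : S → ℝ}
    (hμ : IsDist μ) {c : ℝ} (hc0 : 0 ≤ c) (hc1 : c < 1) (g : S → A → ℝ) :
    Summable fun t => c ^ t * M.expectAt π μ t g := by
  obtain ⟨C, hC⟩ := Finite.exists_le fun p : S × A => |g p.1 p.2|
  exact summable_pow_mul_of_abs_le hc0 hc1 fun t =>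
    (isDist_stateDist hπ hT hμ t).abs_sum_sum_mul_le hπ fun s a => hC (s, a)

lemma abs_tsum_pow_mul_expectAt_le (hπ : IsPolicy π) (hT : IsKernel M.T) {μ : S → ℝ}
    (hμ : IsDist μ) {c : ℝ} (hc0 : 0 ≤ c) (hc1 : c < 1) {g h : S → A → ℝ}
    (hg : ∀ s a, |g s a| ≤ h s a) :
    |∑' t, c ^ t * M.expectAt π μ t g| ≤ ∑' t, c ^ t * M.expectAt π μ t h := by
  rw [← Real.norm_eq_abs]
  refine tsum_of_norm_bounded (summable_pow_mul_expectAt hπ hT hμ hc0 hc1 h).hasSum fun t => ?_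
  rw [Real.norm_eq_abs, abs_mul, abs_of_nonneg (pow_nonneg hc0 t)]
  exact mul_le_mul_of_nonneg_left (abs_expectAt_le hπ hT hμ t hg) (pow_nonneg hc0 t)

lemma stateDist_eq_sum_mul [DecidableEq S] (μ : S → ℝ) (t : ℕ) (s' : S) :
    stateDist M π μ t s' =
      ∑ s₀, μ s₀ * stateDist M π (fun x => if x = s₀ then 1 else 0) t s' := by
  induction t generalizing s' with
  | zero => simp [stateDist]
  | succ t ih =>
    simp only [stateDist_succ_eq_push_stateDist, push, ih, sum_mul, mul_sum, mul_assoc]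
    exact sum_comm_cycle

lemma expectAt_eq_sum_mul [DecidableEq S] (μ : S → ℝ) (t : ℕ) (g : S → A → ℝ) :
    M.expectAt π μ t g =
      ∑ s₀, μ s₀ * M.expectAt π (fun x => if x = s₀ then 1 else 0) t g := by
  simp only [expectAt, stateDist_eq_sum_mul μ t, sum_mul, mul_sum, mul_assoc]
  exact sum_comm_cycle

lemma isDist_dirac [DecidableEq S] (s₀ : S) :
    IsDist fun x => if x = s₀ then (1 : ℝ) else 0 :=
  ⟨fun x => by by_cases h : x = s₀ <;> simp [h], by simp⟩

variable (M π) in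
noncomputable def discountedReturn (μ : S → ℝ) : ℝ :=
  ∑' t, M.γ ^ t * M.expectAt π μ t M.r

lemma discountedReturn_eq_sum_mul_Vval [DecidableEq S] (hπ : IsPolicy π) (hT : IsKernel M.T)
    (hγ0 : 0 ≤ M.γ) (hγ1 : M.γ < 1) (μ : S → ℝ) :
    M.discountedReturn π μ = ∑ s, μ s * Vval M π s := by
  have hsum s₀ :=
    (summable_pow_mul_expectAt hπ hT (isDist_dirac s₀) hγ0 hγ1 M.r).mul_left (μ s₀)
  simp only [discountedReturn, expectAt_eq_sum_mul μ, mul_sum]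
  rw [Summable.tsum_finsetSum fun s₀ _ => (hsum s₀).congr fun t => mul_left_comm _ _ _]
  refine sum_congr rfl fun s₀ _ => ?_
  simp only [mul_left_comm _ (μ s₀)]
  exact tsum_mul_left

lemma Jval_eq_discountedReturn [DecidableEq S] (hπ : IsPolicy π) (hT : IsKernel M.T)
    (hγ0 : 0 ≤ M.γ) (hγ1 : M.γ < 1) (μ : S → ℝ) :
    Jval M π μ = M.discountedReturn π μ :=
  (discountedReturn_eq_sum_mul_Vval hπ hT hγ0 hγ1 μ).symm

lemma discountedReturn_eq_add (hπ : IsPolicy π) (hT : IsKernel M.T) (hγ0 : 0 ≤ M.γ)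
    (hγ1 : M.γ < 1) {μ : S → ℝ} (hμ : IsDist μ) :
    M.discountedReturn π μ =
      M.expectAt π μ 0 M.r + M.γ * M.discountedReturn π (M.push π μ) := by
  rw [discountedReturn, (summable_pow_mul_expectAt hπ hT hμ hγ0 hγ1 M.r).tsum_eq_zero_add,
    discountedReturn, ← tsum_mul_left]
  simp only [pow_zero, one_mul, expectAt_succ, pow_succ, mul_comm _ M.γ, mul_assoc]

lemma sum_sum_occupancy_mul (hπ : IsPolicy π) (hT : IsKernel M.T) (hγ0 : 0 ≤ M.γ)
    (hγ1 : M.γ < 1) {μ : S → ℝ} (hμ : IsDist μ) (g : S → A → ℝ) :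
    ∑ s, ∑ a, occupancy M π μ s a * g s a =
      (1 - M.γ) * ∑' t, M.γ ^ t * M.expectAt π μ t g := by
  have hd := isDist_stateDist hπ hT hμ
  have hsum s : Summable fun t => M.γ ^ t * stateDist M π μ t s :=
    summable_pow_mul_of_abs_le hγ0 hγ1 fun t =>
      (abs_of_nonneg ((hd t).1 s)).trans_le ((hd t).le_one s)
  have key : HasSum (fun t => M.γ ^ t * M.expectAt π μ t g)
      (∑ s, ∑ a, (∑' t, M.γ ^ t * stateDist M π μ t s) * (π s a * g s a)) := by
    refine (hasSum_sum fun s _ => hasSum_sum fun a _ =>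
      (hsum s).hasSum.mul_right (π s a * g s a)).congr_fun fun t => ?_
    simp only [expectAt, mul_sum, mul_assoc]
  simp only [key.tsum_eq, occupancy, mul_sum, mul_assoc]

/-- The telescoping (simulation) lemma. -/
theorem Jval_sub_Jval_eq [DecidableEq S] {Mhat : MDP S A} (hr : M.r = Mhat.r)
    (hγ : M.γ = Mhat.γ) (hγ0 : 0 ≤ M.γ) (hγ1 : M.γ < 1) (hπ : IsPolicy π) (hT : IsKernel M.T)
    (hThat : IsKernel Mhat.T) {μ₀ : S → ℝ} (hμ : IsDist μ₀) :
    Jval M π μ₀ - Jval Mhat π μ₀ = M.γ * ∑' t, M.γ ^ t * Mhat.expectAt π μ₀ t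
      fun s a => ∑ s', M.T s a s' * Vval M π s' - ∑ s', Mhat.T s a s' * Vval M π s' := by
  set g := fun s a => ∑ s', M.T s a s' * Vval M π s' - ∑ s', Mhat.T s a s' * Vval M π s'
  have hd := isDist_stateDist hπ hThat hμ
  have hG := discountedReturn_eq_sum_mul_Vval hπ hT hγ0 hγ1
  have hG_eq_add t := discountedReturn_eq_add hπ hT hγ0 hγ1 (hd t)
  set d := stateDist Mhat π μ₀
  set G := M.discountedReturn π
  have hstep t : G (d t) - M.γ * G (d (t + 1)) =
      Mhat.expectAt π μ₀ t Mhat.r + M.γ * Mhat.expectAt π μ₀ t g := by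
    have hpush : G (M.push π (d t)) - G (d (t + 1)) = Mhat.expectAt π μ₀ t g := by
      rw [show d (t + 1) = Mhat.push π (d t) from rfl, hG, hG, sum_push_mul, sum_push_mul]
      simp only [expectAt, g, mul_sub, sum_sub_distrib]
      rfl
    have hreward : M.expectAt π (d t) 0 Mhat.r = Mhat.expectAt π μ₀ t Mhat.r := rfl
    rw [hG_eq_add t, hr, hreward, ← hpush]
    ring
  obtain ⟨C, hC⟩ := Finite.exists_le fun s => |Vval M π s|
  have hbound t : |G (d t)| ≤ C := by rw [hG]; exact (hd t).abs_sum_mul_le hC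
  have hsumr := summable_pow_mul_expectAt hπ hThat hμ hγ0 hγ1 Mhat.r
  have hsumg := summable_pow_mul_expectAt hπ hThat hμ hγ0 hγ1 g
  calc Jval M π μ₀ - Jval Mhat π μ₀ = G (d 0) - Mhat.discountedReturn π μ₀ := by
        rw [Jval_eq_discountedReturn hπ hT hγ0 hγ1,
          Jval_eq_discountedReturn hπ hThat (hγ ▸ hγ0) (hγ ▸ hγ1)]
        rfl
    _ = M.γ * ∑' t, M.γ ^ t * Mhat.expectAt π μ₀ t g := by
        rw [eq_tsum_pow_mul_sub hγ0 hγ1 hbound]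
        simp only [hstep, mul_add, mul_left_comm _ M.γ]
        rw [hsumr.tsum_add (hsumg.mul_left M.γ), tsum_mul_left, discountedReturn, hγ]
        ring

end MDP

open Finset MDP

/-- If two MDPs share the reward and `‖V^π_M‖_∞ ≤ δ`, then
`|J(π,M) - J(π,M̂)| ≤ (2γδ/(1-γ)) E_{(s,a) ∼ ρ^π_{M̂}}[d_TV(T(·|s,a), T̂(·|s,a))]`. -/
theorem return_gap_le_tv (M Mhat : MDP S A) (π : S → A → ℝ) (μ₀ : S → ℝ) (δ : ℝ)
    (hr : M.r = Mhat.r) (hγ : M.γ = Mhat.γ) (hγ0 : 0 < M.γ) (hγ1 : M.γ < 1)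
    (hπ : IsPolicy π) (hT : IsKernel M.T) (hThat : IsKernel Mhat.T) (hμ : IsDist μ₀)
    (hV : ∀ s, |Vval M π s| ≤ δ) :
    |Jval M π μ₀ - Jval Mhat π μ₀| ≤
      (2 * M.γ * δ / (1 - M.γ)) *
        ∑ s, ∑ a, occupancy Mhat π μ₀ s a * tvFin (M.T s a) (Mhat.T s a) := by
  obtain ⟨s₀⟩ := hμ.nonempty
  have hδ : 0 ≤ δ := (abs_nonneg _).trans (hV s₀)
  have hgap := abs_tsum_pow_mul_expectAt_le hπ hThat hμ hγ0.le hγ1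
    (h := fun s a => 2 * δ * tvFin (M.T s a) (Mhat.T s a)) fun s a =>
    abs_sum_mul_sub_sum_mul_le_tvFin (by rw [hT.2, hThat.2]) hδ hV
  have hocc := sum_sum_occupancy_mul hπ hThat (hγ ▸ hγ0.le) (hγ ▸ hγ1) hμ
    fun s a => 2 * δ * tvFin (M.T s a) (Mhat.T s a)
  rw [← hγ] at hocc
  have hpull : ∑ s, ∑ a, occupancy Mhat π μ₀ s a * (2 * δ * tvFin (M.T s a) (Mhat.T s a)) =
      2 * δ * ∑ s, ∑ a, occupancy Mhat π μ₀ s a * tvFin (M.T s a) (Mhat.T s a) := by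
    simp only [mul_sum]
    exact sum_congr rfl fun s _ => sum_congr rfl fun a _ => by ring
  rw [Jval_sub_Jval_eq hr hγ hγ0.le hγ1 hπ hT hThat hμ, abs_mul, abs_of_pos hγ0,
    div_mul_eq_mul_div, le_div_iff₀ (sub_pos.2 hγ1)]
  calc _ ≤ M.γ * (∑' t, M.γ ^ t * Mhat.expectAt π μ₀ t
          fun s a => 2 * δ * tvFin (M.T s a) (Mhat.T s a)) * (1 - M.γ) := by
        gcongr
    _ = _ := by linear_combination (-M.γ) * hocc + M.γ * hpull
end

section
/- Triangle-style decomposition of the return gap: for MDPs M, M̂ with the same reward and any policies π, π_D, writing Z(s,a) = E_{s'∼T̂(·|s,a)}[V^π_M(s')] − E_{s'∼T(·|s,a)}[V^π_M(s')], one has J(π,M) − J(π,M̂) = −(γ/(1−γ))( E_{ρ^π_{M̂}}[Z] − E_{ρ^{π_D}_M}[Z] ) − (γ/(1−γ)) E_{ρ^{π_D}_M}[Z], and if ‖V^π_M‖_∞ ≤ δ then |E_{ρ^π_{M̂}}[Z] − E_{ρ^{π_D}_M}[Z]| ≤ 2·(2δ)·d_TV(ρ^{π_D}_M, ρ^π_{M̂}).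 -/
open scoped BigOperators

variable {S A : Type*} [Fintype S] [Fintype A] [DecidableEq S]

set_option linter.unusedSectionVars false
section MyAux
variable {S A : Type*} [Fintype S] [Fintype A] [DecidableEq S]

lemma myDist_le_one {μ : S → ℝ} (h : IsDist μ) (s : S) : μ s ≤ 1 :=
  h.2 ▸ Finset.single_le_sum (fun x _ => h.1 x) (Finset.mem_univ s)

lemma myPol_le_one {π : S → A → ℝ} (h : IsPolicy π) (s : S) (a : A) : π s a ≤ 1 :=
  (h.2 s) ▸ Finset.single_le_sum (fun x _ => h.1 s x) (Finset.mem_univ a)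

lemma myStateDist_isDist (M : MDP S A) {π : S → A → ℝ} {μ₀ : S → ℝ}
    (hπ : IsPolicy π) (hT : IsKernel M.T) (hμ : IsDist μ₀) (t : ℕ) :
    IsDist (stateDist M π μ₀ t) := by
  induction t with
  | zero => exact hμ
  | succ t ih =>
    refine ⟨fun s' => Finset.sum_nonneg fun s _ => Finset.sum_nonneg fun a _ =>
      mul_nonneg (mul_nonneg (ih.1 s) (hπ.1 s a)) (hT.1 s a s'), ?_⟩
    show ∑ s', ∑ s, ∑ a, stateDist M π μ₀ t s * π s a * M.T s a s' = 1
    rw [Finset.sum_comm]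
    calc ∑ s, ∑ s', ∑ a, stateDist M π μ₀ t s * π s a * M.T s a s'
        = ∑ s, ∑ a, ∑ s', stateDist M π μ₀ t s * π s a * M.T s a s' := by
          exact Finset.sum_congr rfl fun s _ => Finset.sum_comm
      _ = ∑ s, ∑ a, stateDist M π μ₀ t s * π s a := by
          refine Finset.sum_congr rfl fun s _ => Finset.sum_congr rfl fun a _ => ?_
          rw [← Finset.mul_sum, hT.2 s a, mul_one]
      _ = ∑ s, stateDist M π μ₀ t s := by
          refine Finset.sum_congr rfl fun s _ => ?_
          rw [← Finset.mul_sum, hπ.2 s, mul_one]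
      _ = 1 := ih.2

lemma myExpReward_bound (M : MDP S A) {π : S → A → ℝ} {μ₀ : S → ℝ}
    (hπ : IsPolicy π) (hT : IsKernel M.T) (hμ : IsDist μ₀) (t : ℕ) :
    |expRewardAt M π μ₀ t| ≤ ∑ s, ∑ a, |M.r s a| := by
  have hd := myStateDist_isDist M hπ hT hμ t
  calc |expRewardAt M π μ₀ t| ≤ ∑ s, ∑ a, |stateDist M π μ₀ t s * π s a * M.r s a| :=
        (Finset.abs_sum_le_sum_abs _ _).trans (Finset.sum_le_sum fun s _ =>
          Finset.abs_sum_le_sum_abs _ _)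
    _ ≤ ∑ s, ∑ a, |M.r s a| := by
        refine Finset.sum_le_sum fun s _ => Finset.sum_le_sum fun a _ => ?_
        rw [abs_mul, abs_mul]
        have h1 : |stateDist M π μ₀ t s| ≤ 1 := abs_le.2 ⟨by linarith [hd.1 s], myDist_le_one hd s⟩
        have h2 : |π s a| ≤ 1 := abs_le.2 ⟨by linarith [hπ.1 s a], myPol_le_one hπ s a⟩
        calc |stateDist M π μ₀ t s| * |π s a| * |M.r s a|
            ≤ 1 * 1 * |M.r s a| := by
              apply mul_le_mul (mul_le_mul h1 h2 (abs_nonneg _) zero_le_one) le_rfl (abs_nonneg _) (by norm_num)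
          _ = |M.r s a| := by ring

lemma mySummable {γ C : ℝ} (h0 : 0 ≤ γ) (h1 : γ < 1) {f : ℕ → ℝ}
    (hf : ∀ t, |f t| ≤ C * γ ^ t) : Summable f :=
  Summable.of_abs (Summable.of_nonneg_of_le (fun t => abs_nonneg _) hf
    ((summable_geometric_of_lt_one h0 h1).mul_left C))

end MyAux

section MyAux2
set_option linter.unusedSectionVars false
variable {S A : Type*} [Fintype S] [Fintype A] [DecidableEq S]

lemma myShift (M : MDP S A) (π : S → A → ℝ) (μ₀ : S → ℝ) (t : ℕ) :
    stateDist M π μ₀ (t + 1) = stateDist M π (stateDist M π μ₀ 1) t := by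
  induction t with
  | zero => rfl
  | succ t ih =>
    show (fun s' => ∑ s, ∑ a, stateDist M π μ₀ (t + 1) s * π s a * M.T s a s') = _
    rw [ih]
    rfl

lemma myLinear (M : MDP S A) (π : S → A → ℝ) (μ₀ : S → ℝ) (t : ℕ) (x : S) :
    stateDist M π μ₀ t x
      = ∑ s, μ₀ s * stateDist M π (fun y => if y = s then (1 : ℝ) else 0) t x := by
  induction t generalizing x with
  | zero =>
    simp only [stateDist, mul_ite, mul_one, mul_zero]
    rw [Finset.sum_ite_eq Finset.univ x μ₀]
    simp
  | succ t ih =>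
    show ∑ s', ∑ a, stateDist M π μ₀ t s' * π s' a * M.T s' a x = _
    have : ∀ s', stateDist M π μ₀ t s'
        = ∑ s, μ₀ s * stateDist M π (fun y => if y = s then (1 : ℝ) else 0) t s' := ih
    calc ∑ s', ∑ a, stateDist M π μ₀ t s' * π s' a * M.T s' a x
        = ∑ s', ∑ a, ∑ s, μ₀ s * stateDist M π (fun y => if y = s then (1 : ℝ) else 0) t s'
            * π s' a * M.T s' a x := by
          refine Finset.sum_congr rfl fun s' _ => Finset.sum_congr rfl fun a _ => ?_
          rw [this s', Finset.sum_mul, Finset.sum_mul]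
      _ = ∑ s', ∑ s, ∑ a, μ₀ s * stateDist M π (fun y => if y = s then (1 : ℝ) else 0) t s'
            * π s' a * M.T s' a x := by
          exact Finset.sum_congr rfl fun s' _ => Finset.sum_comm
      _ = ∑ s, ∑ s', ∑ a, μ₀ s * stateDist M π (fun y => if y = s then (1 : ℝ) else 0) t s'
            * π s' a * M.T s' a x := by exact Finset.sum_comm
      _ = ∑ s, μ₀ s * ∑ s', ∑ a, stateDist M π (fun y => if y = s then (1 : ℝ) else 0) t s'
            * π s' a * M.T s' a x := by
          refine Finset.sum_congr rfl fun s _ => ?_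
          rw [Finset.mul_sum]
          refine Finset.sum_congr rfl fun s' _ => ?_
          rw [Finset.mul_sum]
          exact Finset.sum_congr rfl fun a _ => by ring
      _ = _ := rfl

lemma myExpLinear (M : MDP S A) (π : S → A → ℝ) (μ₀ : S → ℝ) (t : ℕ) :
    expRewardAt M π μ₀ t
      = ∑ s, μ₀ s * expRewardAt M π (fun y => if y = s then (1 : ℝ) else 0) t := by
  unfold expRewardAt
  calc ∑ x, ∑ a, stateDist M π μ₀ t x * π x a * M.r x a
      = ∑ x, ∑ a, ∑ s, μ₀ s * stateDist M π (fun y => if y = s then (1 : ℝ) else 0) t x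
          * π x a * M.r x a := by
        refine Finset.sum_congr rfl fun x _ => Finset.sum_congr rfl fun a _ => ?_
        rw [myLinear M π μ₀ t x, Finset.sum_mul, Finset.sum_mul]
    _ = ∑ x, ∑ s, ∑ a, μ₀ s * stateDist M π (fun y => if y = s then (1 : ℝ) else 0) t x
          * π x a * M.r x a := by
        exact Finset.sum_congr rfl fun x _ => Finset.sum_comm
    _ = ∑ s, ∑ x, ∑ a, μ₀ s * stateDist M π (fun y => if y = s then (1 : ℝ) else 0) t x
          * π x a * M.r x a := by exact Finset.sum_comm
    _ = ∑ s, μ₀ s * ∑ x, ∑ a, stateDist M π (fun y => if y = s then (1 : ℝ) else 0) t x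
          * π x a * M.r x a := by
        refine Finset.sum_congr rfl fun s _ => ?_
        rw [Finset.mul_sum]
        refine Finset.sum_congr rfl fun x _ => ?_
        rw [Finset.mul_sum]
        exact Finset.sum_congr rfl fun a _ => by ring

lemma myDirac_isDist (s : S) : IsDist (fun y => if y = s then (1 : ℝ) else 0) := by
  constructor
  · intro y; by_cases h : y = s <;> simp [h]
  · simp

lemma myExpShift (M : MDP S A) (π : S → A → ℝ) (μ₀ : S → ℝ) (t : ℕ) :
    expRewardAt M π μ₀ (t + 1) = expRewardAt M π (stateDist M π μ₀ 1) t := by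
  unfold expRewardAt
  rw [myShift]

end MyAux2

section MyAux3
set_option linter.unusedSectionVars false
variable {S A : Type*} [Fintype S] [Fintype A] [DecidableEq S]

lemma myGeoBound (M : MDP S A) {π : S → A → ℝ} {μ₀ : S → ℝ}
    (hπ : IsPolicy π) (hT : IsKernel M.T) (hμ : IsDist μ₀) (h0 : 0 ≤ M.γ) (t : ℕ) :
    |M.γ ^ t * expRewardAt M π μ₀ t| ≤ (∑ s, ∑ a, |M.r s a|) * M.γ ^ t := by
  rw [abs_mul, abs_pow, abs_of_nonneg h0, mul_comm]
  exact mul_le_mul_of_nonneg_right (myExpReward_bound M hπ hT hμ t) (pow_nonneg h0 t)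

lemma myVsummable (M : MDP S A) {π : S → A → ℝ} {μ₀ : S → ℝ}
    (hπ : IsPolicy π) (hT : IsKernel M.T) (hμ : IsDist μ₀) (h0 : 0 ≤ M.γ) (h1 : M.γ < 1) :
    Summable (fun t => M.γ ^ t * expRewardAt M π μ₀ t) :=
  mySummable h0 h1 (myGeoBound M hπ hT hμ h0)

lemma myJ_tsum (M : MDP S A) {π : S → A → ℝ} {μ₀ : S → ℝ}
    (hπ : IsPolicy π) (hT : IsKernel M.T) (hμ : IsDist μ₀) (h0 : 0 ≤ M.γ) (h1 : M.γ < 1) :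
    Jval M π μ₀ = ∑' t, M.γ ^ t * expRewardAt M π μ₀ t := by
  unfold Jval Vval
  calc ∑ s, μ₀ s * ∑' t, M.γ ^ t * expRewardAt M π (fun x => if x = s then (1 : ℝ) else 0) t
      = ∑ s, ∑' t, μ₀ s * (M.γ ^ t * expRewardAt M π (fun x => if x = s then (1 : ℝ) else 0) t) := by
        exact Finset.sum_congr rfl fun s _ => (tsum_mul_left).symm
    _ = ∑' t, ∑ s, μ₀ s * (M.γ ^ t * expRewardAt M π (fun x => if x = s then (1 : ℝ) else 0) t) := by
        refine (Summable.tsum_finsetSum fun s _ => ?_).symm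
        exact (myVsummable M hπ hT (myDirac_isDist s) h0 h1).mul_left _
    _ = ∑' t, M.γ ^ t * expRewardAt M π μ₀ t := by
        refine tsum_congr fun t => ?_
        rw [myExpLinear M π μ₀ t, Finset.mul_sum]
        exact Finset.sum_congr rfl fun s _ => by ring

lemma myJ_bound (M : MDP S A) {π : S → A → ℝ} {μ₀ : S → ℝ}
    (hπ : IsPolicy π) (hT : IsKernel M.T) (hμ : IsDist μ₀) (h0 : 0 ≤ M.γ) (h1 : M.γ < 1) :
    |Jval M π μ₀| ≤ (∑ s, ∑ a, |M.r s a|) * (1 - M.γ)⁻¹ := by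
  rw [myJ_tsum M hπ hT hμ h0 h1]
  have habs : Summable (fun t => |M.γ ^ t * expRewardAt M π μ₀ t|) :=
    (myVsummable M hπ hT hμ h0 h1).abs
  calc |∑' t, M.γ ^ t * expRewardAt M π μ₀ t| ≤ ∑' t, |M.γ ^ t * expRewardAt M π μ₀ t| := by
        simpa only [Real.norm_eq_abs] using norm_tsum_le_tsum_norm
          (f := fun t => M.γ ^ t * expRewardAt M π μ₀ t)
          (by simpa only [Real.norm_eq_abs] using habs)
    _ ≤ ∑' t, (∑ s, ∑ a, |M.r s a|) * M.γ ^ t := by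
        refine Summable.tsum_le_tsum (myGeoBound M hπ hT hμ h0) habs ?_
        exact (summable_geometric_of_lt_one h0 h1).mul_left _
    _ = (∑ s, ∑ a, |M.r s a|) * (1 - M.γ)⁻¹ := by
        rw [tsum_mul_left, tsum_geometric_of_lt_one h0 h1]

lemma myJ_step (M : MDP S A) {π : S → A → ℝ} {μ₀ : S → ℝ}
    (hπ : IsPolicy π) (hT : IsKernel M.T) (hμ : IsDist μ₀) (h0 : 0 ≤ M.γ) (h1 : M.γ < 1) :
    Jval M π μ₀ = expRewardAt M π μ₀ 0 + M.γ * Jval M π (stateDist M π μ₀ 1) := by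
  rw [myJ_tsum M hπ hT hμ h0 h1,
    myJ_tsum M hπ hT (myStateDist_isDist M hπ hT hμ 1) h0 h1,
    Summable.tsum_eq_zero_add (myVsummable M hπ hT hμ h0 h1)]
  simp only [pow_zero, one_mul]
  congr 1
  rw [← tsum_mul_left]
  exact tsum_congr fun t => by rw [myExpShift, pow_succ]; ring

lemma myUnroll (M : MDP S A) {π : S → A → ℝ} (γ : ℝ) (G w : (S → ℝ) → ℝ)
    (hπ : IsPolicy π) (hT : IsKernel M.T)
    (h : ∀ μ, IsDist μ → G μ = γ * (w μ + G (stateDist M π μ 1)))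
    {μ₀ : S → ℝ} (hμ : IsDist μ₀) (n : ℕ) :
    G μ₀ = (∑ t ∈ Finset.range n, γ ^ (t + 1) * w (stateDist M π μ₀ t))
      + γ ^ n * G (stateDist M π μ₀ n) := by
  induction n with
  | zero => simp [stateDist]
  | succ n ih =>
    rw [ih, h (stateDist M π μ₀ n) (myStateDist_isDist M hπ hT hμ n), Finset.sum_range_succ,
      show stateDist M π (stateDist M π μ₀ n) 1 = stateDist M π μ₀ (n + 1) from rfl]
    ring

lemma myOcc (M : MDP S A) {π : S → A → ℝ} {μ₀ : S → ℝ} (Z : S → A → ℝ)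
    (hπ : IsPolicy π) (hT : IsKernel M.T) (hμ : IsDist μ₀) (h0 : 0 ≤ M.γ) (h1 : M.γ < 1) :
    ∑ s, ∑ a, occupancy M π μ₀ s a * Z s a
      = (1 - M.γ) * ∑' t, M.γ ^ t * ∑ s, ∑ a, stateDist M π μ₀ t s * π s a * Z s a := by
  have hsum : ∀ s : S, Summable
      (fun t => M.γ ^ t * stateDist M π μ₀ t s * (∑ a, π s a * Z s a)) := by
    intro s
    refine mySummable h0 h1 (C := |∑ a, π s a * Z s a|) fun t => ?_
    have hd := myStateDist_isDist M hπ hT hμ t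
    have hP1 := myDist_le_one hd s
    have hP0 := hd.1 s
    have hg : (0:ℝ) ≤ M.γ ^ t := pow_nonneg h0 t
    rw [abs_mul, abs_mul, abs_pow, abs_of_nonneg h0, abs_of_nonneg hP0]
    nlinarith [abs_nonneg (∑ a, π s a * Z s a),
      mul_nonneg (mul_nonneg hg (abs_nonneg (∑ a, π s a * Z s a))) (sub_nonneg.2 hP1)]
  calc ∑ s, ∑ a, occupancy M π μ₀ s a * Z s a
      = ∑ s, (1 - M.γ) * ((∑' t, M.γ ^ t * stateDist M π μ₀ t s) * ∑ a, π s a * Z s a) := by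
        refine Finset.sum_congr rfl fun s _ => ?_
        rw [Finset.mul_sum, Finset.mul_sum]
        exact Finset.sum_congr rfl fun a _ => by unfold occupancy; ring
    _ = (1 - M.γ) * ∑ s, ∑' t, M.γ ^ t * stateDist M π μ₀ t s * (∑ a, π s a * Z s a) := by
        rw [Finset.mul_sum]
        refine Finset.sum_congr rfl fun s _ => ?_
        congr 1
        rw [← tsum_mul_right]
    _ = (1 - M.γ) * ∑' t, ∑ s, M.γ ^ t * stateDist M π μ₀ t s * (∑ a, π s a * Z s a) := by
        rw [Summable.tsum_finsetSum fun s _ => hsum s]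
    _ = (1 - M.γ) * ∑' t, M.γ ^ t * ∑ s, ∑ a, stateDist M π μ₀ t s * π s a * Z s a := by
        congr 1
        refine tsum_congr fun t => ?_
        rw [Finset.mul_sum]
        refine Finset.sum_congr rfl fun s _ => ?_
        rw [Finset.mul_sum, Finset.mul_sum]
        exact Finset.sum_congr rfl fun a _ => by ring

end MyAux3

lemma myTV {X : Type*} [Fintype X] (p q : X → ℝ) :
    ∑ x, |p x - q x| ≤ 2 * tvFin p q := by
  classical
  have hbdd : BddAbove (Set.range fun E : Finset X => |∑ x ∈ E, p x - ∑ x ∈ E, q x|) :=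
    Set.Finite.bddAbove (Set.finite_range _)
  set E := Finset.univ.filter (fun x => q x ≤ p x) with hE
  set F := Finset.univ.filter (fun x => ¬ q x ≤ p x) with hF
  have h1 : ∑ x ∈ E, p x - ∑ x ∈ E, q x ≤ tvFin p q :=
    (le_abs_self _).trans (le_ciSup hbdd E)
  have h2 : ∑ x ∈ F, q x - ∑ x ∈ F, p x ≤ tvFin p q := by
    have h3 : ∑ x ∈ F, q x - ∑ x ∈ F, p x ≤ |∑ x ∈ F, p x - ∑ x ∈ F, q x| := by
      rw [abs_sub_comm]; exact le_abs_self _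
    exact h3.trans (le_ciSup hbdd F)
  have key : ∑ x, |p x - q x|
      = (∑ x ∈ E, (p x - q x)) + (∑ x ∈ F, (q x - p x)) := by
    rw [← Finset.sum_filter_add_sum_filter_not Finset.univ (fun x => q x ≤ p x)
      (fun x => |p x - q x|)]
    congr 1
    · exact Finset.sum_congr rfl fun x hx =>
        abs_of_nonneg (sub_nonneg.2 (Finset.mem_filter.1 hx).2)
    · refine Finset.sum_congr rfl fun x hx => ?_
      have hx' := (Finset.mem_filter.1 hx).2
      rw [abs_of_neg (sub_neg.2 (lt_of_not_ge hx')), neg_sub]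
  rw [key, Finset.sum_sub_distrib, Finset.sum_sub_distrib]
  linarith


/-- Triangle-style decomposition of the return gap. With
`Z(s,a) = E_{s' ∼ T̂(·|s,a)}[V^π_M(s')] - E_{s' ∼ T(·|s,a)}[V^π_M(s')]`:
`J(π,M) - J(π,M̂) = -(γ/(1-γ))(E_{ρ^π_{M̂}}[Z] - E_{ρ^{π_D}_M}[Z]) - (γ/(1-γ)) E_{ρ^{π_D}_M}[Z]`,
and if `‖V^π_M‖_∞ ≤ δ` then
`|E_{ρ^π_{M̂}}[Z] - E_{ρ^{π_D}_M}[Z]| ≤ 2 (2δ) d_TV(ρ^{π_D}_M, ρ^π_{M̂})`. -/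
theorem return_gap_decomposition (M Mhat : MDP S A) (π πD : S → A → ℝ) (μ₀ : S → ℝ) (δ : ℝ)
    (Z : S → A → ℝ)
    (hZ : ∀ s a, Z s a =
      (∑ s', Mhat.T s a s' * Vval M π s') - (∑ s', M.T s a s' * Vval M π s'))
    (hr : M.r = Mhat.r) (hγ : M.γ = Mhat.γ) (hγ0 : 0 < M.γ) (hγ1 : M.γ < 1)
    (hπ : IsPolicy π) (hπD : IsPolicy πD)
    (hT : IsKernel M.T) (hThat : IsKernel Mhat.T) (hμ : IsDist μ₀)
    (hV : ∀ s, |Vval M π s| ≤ δ) :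
    Jval M π μ₀ - Jval Mhat π μ₀ =
      -(M.γ / (1 - M.γ)) *
          ((∑ s, ∑ a, occupancy Mhat π μ₀ s a * Z s a) -
            (∑ s, ∑ a, occupancy M πD μ₀ s a * Z s a)) -
        (M.γ / (1 - M.γ)) * (∑ s, ∑ a, occupancy M πD μ₀ s a * Z s a) ∧
    |(∑ s, ∑ a, occupancy Mhat π μ₀ s a * Z s a) -
        (∑ s, ∑ a, occupancy M πD μ₀ s a * Z s a)| ≤
      2 * (2 * δ) * tvFin (fun x : S × A => occupancy M πD μ₀ x.1 x.2)
        (fun x : S × A => occupancy Mhat π μ₀ x.1 x.2) := by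
  classical
  rcases isEmpty_or_nonempty S with hS | hS
  · exact absurd hμ.2 (by simp)
  rcases isEmpty_or_nonempty A with hA | hA
  · exact absurd (hπ.2 (Classical.arbitrary S)) (by simp)
  have h0 : (0:ℝ) ≤ M.γ := le_of_lt hγ0
  have h0' : (0:ℝ) ≤ Mhat.γ := hγ ▸ h0
  have h1' : Mhat.γ < 1 := hγ ▸ hγ1
  have hδ0 : 0 ≤ δ := le_trans (abs_nonneg _) (hV (Classical.arbitrary S))
  have hne : (1:ℝ) - M.γ ≠ 0 := by linarith
  -- bound on Z
  have hZb : ∀ s a, |Z s a| ≤ 2 * δ := by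
    intro s a
    rw [hZ s a]
    have bnd : ∀ (T : S → A → S → ℝ), IsKernel T →
        |∑ s', T s a s' * Vval M π s'| ≤ δ := by
      intro T hK
      calc |∑ s', T s a s' * Vval M π s'| ≤ ∑ s', |T s a s' * Vval M π s'| :=
            Finset.abs_sum_le_sum_abs _ _
        _ ≤ ∑ s', T s a s' * δ := by
            refine Finset.sum_le_sum fun s' _ => ?_
            rw [abs_mul, abs_of_nonneg (hK.1 s a s')]
            exact mul_le_mul_of_nonneg_left (hV s') (hK.1 s a s')
        _ = δ := by rw [← Finset.sum_mul, hK.2 s a, one_mul]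
    calc |(∑ s', Mhat.T s a s' * Vval M π s') - ∑ s', M.T s a s' * Vval M π s'|
        ≤ |∑ s', Mhat.T s a s' * Vval M π s'| + |∑ s', M.T s a s' * Vval M π s'| :=
          abs_sub _ _
      _ ≤ δ + δ := add_le_add (bnd Mhat.T hThat) (bnd M.T hT)
      _ = 2 * δ := by ring
  -- the gap function and its recursion
  set G : (S → ℝ) → ℝ := fun μ => Jval Mhat π μ - Jval M π μ with hG
  set w : (S → ℝ) → ℝ := fun μ => ∑ s, ∑ a, μ s * π s a * Z s a with hw
  have hstep : ∀ μ : S → ℝ, IsDist μ → G μ = M.γ * (w μ + G (stateDist Mhat π μ 1)) := by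
    intro μ hd
    have e1 := myJ_step Mhat hπ hThat hd h0' h1'
    have e2 := myJ_step M hπ hT hd h0 hγ1
    have hE0 : expRewardAt Mhat π μ 0 = expRewardAt M π μ 0 := by
      show ∑ s, ∑ a, μ s * π s a * Mhat.r s a = ∑ s, ∑ a, μ s * π s a * M.r s a
      rw [hr]
    have key : Jval M π (stateDist Mhat π μ 1) - Jval M π (stateDist M π μ 1) = w μ := by
      unfold Jval
      rw [← Finset.sum_sub_distrib]
      have hsd : ∀ (N : MDP S A) (x : S),
          stateDist N π μ 1 x = ∑ s, ∑ a, μ s * π s a * N.T s a x := fun N x => rfl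
      calc ∑ x, (stateDist Mhat π μ 1 x * Vval M π x - stateDist M π μ 1 x * Vval M π x)
          = ∑ x, ∑ s, ∑ a, (μ s * π s a * Mhat.T s a x * Vval M π x
              - μ s * π s a * M.T s a x * Vval M π x) := by
            refine Finset.sum_congr rfl fun x _ => ?_
            rw [hsd Mhat x, hsd M x, Finset.sum_mul, Finset.sum_mul, ← Finset.sum_sub_distrib]
            refine Finset.sum_congr rfl fun s _ => ?_
            rw [Finset.sum_mul, Finset.sum_mul, ← Finset.sum_sub_distrib]
        _ = ∑ s, ∑ x, ∑ a, (μ s * π s a * Mhat.T s a x * Vval M π x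
              - μ s * π s a * M.T s a x * Vval M π x) := by exact Finset.sum_comm
        _ = ∑ s, ∑ a, ∑ x, (μ s * π s a * Mhat.T s a x * Vval M π x
              - μ s * π s a * M.T s a x * Vval M π x) :=
            Finset.sum_congr rfl fun s _ => Finset.sum_comm
        _ = ∑ s, ∑ a, μ s * π s a * Z s a := by
            refine Finset.sum_congr rfl fun s _ => Finset.sum_congr rfl fun a _ => ?_
            rw [hZ s a, Finset.sum_sub_distrib, mul_sub, Finset.mul_sum, Finset.mul_sum]
            congr 1 <;> exact Finset.sum_congr rfl fun x _ => by ring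
        _ = w μ := rfl
    have e3 : G μ = M.γ * (Jval Mhat π (stateDist Mhat π μ 1)
        - Jval M π (stateDist M π μ 1)) := by
      simp only [hG]
      rw [e1, e2, hE0, ← hγ]
      ring
    rw [e3, show Jval Mhat π (stateDist Mhat π μ 1) - Jval M π (stateDist M π μ 1)
      = w μ + (Jval Mhat π (stateDist Mhat π μ 1) - Jval M π (stateDist Mhat π μ 1)) from by
        linarith [key]]
  -- bound on w over distributions, via a trick: w ν = expRewardAt of the MDP with reward Z
  have hwb : ∀ ν : S → ℝ, IsDist ν → |w ν| ≤ ∑ s, ∑ a, |Z s a| := by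
    intro ν hν
    have := myExpReward_bound (S := S) (A := A) ⟨Z, M.T, M.γ⟩ hπ hT hν 0
    simpa [expRewardAt, hw, stateDist] using this
  -- summability of the series
  set a : ℕ → ℝ := fun t => M.γ ^ (t + 1) * w (stateDist Mhat π μ₀ t) with ha_def
  have ha : Summable a := by
    refine mySummable h0 hγ1 (C := M.γ * ∑ s, ∑ a, |Z s a|) fun t => ?_
    have hd := myStateDist_isDist Mhat hπ hThat hμ t
    have hb := hwb _ hd
    rw [ha_def]
    simp only
    rw [abs_mul, abs_pow, abs_of_nonneg h0, pow_succ]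
    calc M.γ ^ t * M.γ * |w (stateDist Mhat π μ₀ t)|
        ≤ M.γ ^ t * M.γ * (∑ s, ∑ a, |Z s a|) := by
          refine mul_le_mul_of_nonneg_left hb (mul_nonneg (pow_nonneg h0 t) h0)
      _ = M.γ * (∑ s, ∑ a, |Z s a|) * M.γ ^ t := by ring
  -- bound on G over distributions
  have hGb : ∀ ν : S → ℝ, IsDist ν →
      |G ν| ≤ 2 * ((∑ s, ∑ a, |M.r s a|) * (1 - M.γ)⁻¹) := by
    intro ν hν
    have b1 := myJ_bound M hπ hT hν h0 hγ1
    have b2 := myJ_bound Mhat hπ hThat hν h0' h1'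
    rw [← hr, ← hγ] at b2
    simp only [hG]
    calc |Jval Mhat π ν - Jval M π ν| ≤ |Jval Mhat π ν| + |Jval M π ν| := abs_sub _ _
      _ ≤ 2 * ((∑ s, ∑ a, |M.r s a|) * (1 - M.γ)⁻¹) := by linarith
  -- limit argument
  have hunroll := myUnroll Mhat M.γ G w hπ hThat hstep hμ
  have h1n := ha.hasSum.tendsto_sum_nat
  have h2n : Filter.Tendsto (fun n => M.γ ^ n * G (stateDist Mhat π μ₀ n))
      Filter.atTop (nhds 0) := by
    refine squeeze_zero_norm
      (a := fun n => 2 * ((∑ s, ∑ a, |M.r s a|) * (1 - M.γ)⁻¹) * M.γ ^ n) (fun n => ?_) ?_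
    · rw [Real.norm_eq_abs, abs_mul, abs_pow, abs_of_nonneg h0]
      calc M.γ ^ n * |G (stateDist Mhat π μ₀ n)|
          ≤ M.γ ^ n * (2 * ((∑ s, ∑ a, |M.r s a|) * (1 - M.γ)⁻¹)) :=
            mul_le_mul_of_nonneg_left
              (hGb _ (myStateDist_isDist Mhat hπ hThat hμ n)) (pow_nonneg h0 n)
        _ = 2 * ((∑ s, ∑ a, |M.r s a|) * (1 - M.γ)⁻¹) * M.γ ^ n := mul_comm _ _
    · have := (tendsto_pow_atTop_nhds_zero_of_lt_one h0 hγ1).const_mul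
        (2 * ((∑ s, ∑ a, |M.r s a|) * (1 - M.γ)⁻¹))
      simpa using this
  have hGμ₀ : G μ₀ = ∑' t, a t := by
    have hcomb := h1n.add h2n
    rw [add_zero] at hcomb
    have hconst : Filter.Tendsto (fun _ : ℕ => G μ₀) Filter.atTop (nhds (∑' t, a t)) := by
      refine hcomb.congr fun n => ?_
      exact (hunroll n).symm
    exact tendsto_nhds_unique tendsto_const_nhds hconst
  set T : ℝ := ∑' t, M.γ ^ t * w (stateDist Mhat π μ₀ t) with hTdef
  have haT : ∑' t, a t = M.γ * T := by
    rw [hTdef, ← tsum_mul_left]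
    refine tsum_congr fun t => ?_
    rw [ha_def]
    simp only
    rw [pow_succ]
    ring
  have hX : (∑ s, ∑ a, occupancy Mhat π μ₀ s a * Z s a) = (1 - M.γ) * T := by
    rw [myOcc Mhat Z hπ hThat hμ h0' h1', ← hγ, hTdef]
  have key1 : Jval M π μ₀ - Jval Mhat π μ₀ = -(M.γ * T) := by
    have hh : G μ₀ = M.γ * T := by rw [hGμ₀, haT]
    simp only [hG] at hh
    linarith
  constructor
  · rw [key1, hX]
    field_simp
    ring
  · -- the TV bound
    set p : S × A → ℝ := fun x => occupancy Mhat π μ₀ x.1 x.2 with hp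
    set q : S × A → ℝ := fun x => occupancy M πD μ₀ x.1 x.2 with hq
    have hprod : ∀ f : S → A → ℝ, (∑ x : S × A, f x.1 x.2) = ∑ s, ∑ a, f s a := fun f =>
      Fintype.sum_prod_type _
    have hXp : (∑ s, ∑ a, occupancy Mhat π μ₀ s a * Z s a)
        = ∑ x : S × A, p x * Z x.1 x.2 := (hprod _).symm
    have hYq : (∑ s, ∑ a, occupancy M πD μ₀ s a * Z s a)
        = ∑ x : S × A, q x * Z x.1 x.2 := (hprod _).symm
    rw [hXp, hYq, ← Finset.sum_sub_distrib]
    calc |∑ x : S × A, (p x * Z x.1 x.2 - q x * Z x.1 x.2)|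
        ≤ ∑ x : S × A, |p x * Z x.1 x.2 - q x * Z x.1 x.2| := Finset.abs_sum_le_sum_abs _ _
      _ ≤ ∑ x : S × A, |q x - p x| * (2 * δ) := by
          refine Finset.sum_le_sum fun x _ => ?_
          rw [show p x * Z x.1 x.2 - q x * Z x.1 x.2 = (p x - q x) * Z x.1 x.2 from by ring,
            abs_mul, abs_sub_comm]
          exact mul_le_mul_of_nonneg_left (hZb x.1 x.2) (abs_nonneg _)
      _ = (∑ x : S × A, |q x - p x|) * (2 * δ) := (Finset.sum_mul _ _ _).symm
      _ ≤ (2 * tvFin q p) * (2 * δ) := by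
          refine mul_le_mul_of_nonneg_right (myTV q p) (by linarith)
      _ = 2 * (2 * δ) * tvFin q p := by ring
end
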